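/- arXiv:2306.15621 — 7 statements merged into one kernel-verified Lean document; each statement's English description precedes it below -/
import Mathlib

section
/- Let 𝒳 ⊆ ℝ^d be an open convex domain, p ∈ 𝒳 a site, f_p a τ-admissible distance function, and B ⊂ 𝒳 a Euclidean ball. If B and p are (τκ)-separated for some κ > 1, then f_p⁺(B) ≤ f_p⁻(B) · κ/(κ − 1). -/
/-!
By the admissibility bound, every point `z` of the ball satisfies
`‖∇f z‖ · ‖z - p‖ ≤ τ f z`, while separation gives `‖z - p‖ ≥ τκ · diam B`; hence
`‖∇f z‖ · diam B ≤ f z / κ ≤ f⁺(B) / κ`. The mean value theorem on the convex ball then bounds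
the oscillation `f⁺(B) - f⁻(B)` by `f⁺(B) / κ`, which rearranges to `f⁺(B) ≤ f⁻(B) · κ/(κ-1)`.
-/

open Metric

theorem sSup_image_le_sInf_image_mul_div {α : Type*} {s : Set α} {f : α → ℝ} {κ : ℝ}
    (hκ : 1 < κ) (hosc : ∀ x ∈ s, ∀ y ∈ s, f x - f y ≤ sSup (f '' s) / κ) :
    sSup (f '' s) ≤ sInf (f '' s) * κ / (κ - 1) := by
  rcases s.eq_empty_or_nonempty with rfl | hs
  · simp
  set M := sSup (f '' s)
  have hκ0 : 0 < κ := by linarith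
  have hM : ∀ y ∈ s, M ≤ f y + M / κ := fun y hy =>
    csSup_le (hs.image f) <| by
      rintro _ ⟨x, hx, rfl⟩
      linarith [hosc x hx y hy]
  have hMinf : M * (κ - 1) / κ ≤ sInf (f '' s) :=
    le_csInf (hs.image f) <| by
      rintro _ ⟨y, hy, rfl⟩
      have := hM y hy
      rw [mul_sub, mul_one, sub_div, mul_div_cancel_right₀ M hκ0.ne']
      linarith
  rw [le_div_iff₀ (sub_pos.2 hκ)]
  rwa [div_le_iff₀ hκ0] at hMinf

theorem sub_le_of_norm_fderiv_mul_norm_sub_le {E : Type*} [NormedAddCommGroup E]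
    [NormedSpace ℝ E] {f : E → ℝ} {s : Set E} {K : ℝ} (hs : Convex ℝ s)
    (hf : ∀ z ∈ s, DifferentiableAt ℝ f z)
    (hK : ∀ z ∈ s, ∀ x ∈ s, ∀ y ∈ s, ‖fderiv ℝ f z‖ * ‖x - y‖ ≤ K)
    {x y : E} (hx : x ∈ s) (hy : y ∈ s) : f x - f y ≤ K := by
  rcases eq_or_ne x y with rfl | hxy
  · simpa using hK x hx x hx x hx
  have hxy' : 0 < ‖x - y‖ := norm_pos_iff.2 (sub_ne_zero.2 hxy)
  have hbound : ∀ z ∈ s, ‖fderiv ℝ f z‖ ≤ K / ‖x - y‖ := fun z hz =>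
    (le_div_iff₀ hxy').2 (hK z hz x hx y hy)
  calc f x - f y ≤ ‖f x - f y‖ := Real.le_norm_self _
    _ ≤ K / ‖x - y‖ * ‖x - y‖ := hs.norm_image_sub_le_of_norm_fderiv_le hf hbound hy hx
    _ = K := div_mul_cancel₀ K hxy'.ne'

theorem norm_fderiv_mul_norm_sub_le_of_separated {E : Type*} [NormedAddCommGroup E]
    [InnerProductSpace ℝ E] [CompleteSpace E] {f : E → ℝ} {s : Set E} {p x y z : E}
    {τ κ : ℝ} (hτ : 0 < τ) (hκ : 0 < κ) (hs : Bornology.IsBounded s)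
    (hsep : τ * κ * diam s ≤ infDist p s)
    (hgrad : ‖gradient f z‖ * ‖z - p‖ ≤ τ * f z)
    (hz : z ∈ s) (hx : x ∈ s) (hy : y ∈ s) :
    ‖fderiv ℝ f z‖ * ‖x - y‖ ≤ f z / κ := by
  have hnorm : ‖fderiv ℝ f z‖ = ‖gradient f z‖ :=
    ((InnerProductSpace.toDual ℝ E).symm.norm_map _).symm
  have hdist : τ * κ * ‖x - y‖ ≤ ‖z - p‖ :=
    calc τ * κ * ‖x - y‖ ≤ τ * κ * diam s := by
          rw [← dist_eq_norm]; gcongr; exact dist_le_diam_of_mem hs hx hy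
      _ ≤ infDist p s := hsep
      _ ≤ ‖z - p‖ := by rw [← dist_eq_norm, dist_comm]; exact infDist_le_dist_of_mem hz
  rw [le_div_iff₀ hκ, hnorm]
  refine le_of_mul_le_mul_left ?_ hτ
  calc τ * (‖gradient f z‖ * ‖x - y‖ * κ) = ‖gradient f z‖ * (τ * κ * ‖x - y‖) := by ring
    _ ≤ ‖gradient f z‖ * ‖z - p‖ := by gcongr
    _ ≤ τ * f z := hgrad

theorem stmt0_general
    {d : ℕ} (𝒳 : Set (EuclideanSpace ℝ (Fin d)))
    (hopen : IsOpen 𝒳)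
    (p : EuclideanSpace ℝ (Fin d))
    (f : EuclideanSpace ℝ (Fin d) → ℝ)
    (hsmooth : ContDiffOn ℝ 2 f 𝒳)
    (τ : ℝ) (hτ : 0 < τ)
    (hgrad : ∀ x ∈ 𝒳, ‖gradient f x‖ * ‖x - p‖ ≤ τ * f x)
    (c : EuclideanSpace ℝ (Fin d)) (r : ℝ)
    (hB : closedBall c r ⊆ 𝒳)
    (κ : ℝ) (hκ : 1 < κ)
    (hsep : infDist p (closedBall c r) / diam (closedBall c r) ≥ τ * κ) :
    sSup (f '' closedBall c r) ≤ sInf (f '' closedBall c r) * κ / (κ - 1) := by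
  set B := closedBall c r
  have hsep' : τ * κ * diam B ≤ infDist p B := mul_le_of_le_div₀ infDist_nonneg diam_nonneg hsep
  have hdiff : ∀ z ∈ B, DifferentiableAt ℝ f z := fun z hz =>
    (hsmooth.differentiableOn two_ne_zero).differentiableAt (hopen.mem_nhds (hB hz))
  have hbdd : BddAbove (f '' B) :=
    (isCompact_closedBall c r).bddAbove_image (hsmooth.continuousOn.mono hB)
  refine sSup_image_le_sInf_image_mul_div hκ fun x hx y hy =>
    sub_le_of_norm_fderiv_mul_norm_sub_le (convex_closedBall c r) hdiff
      (fun z hz x' hx' y' hy' => ?_) hx hy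
  calc ‖fderiv ℝ f z‖ * ‖x' - y'‖
      ≤ f z / κ := norm_fderiv_mul_norm_sub_le_of_separated hτ (by linarith) isBounded_closedBall
        hsep' (hgrad z (hB hz)) hz hx' hy'
    _ ≤ sSup (f '' B) / κ := by gcongr; exact le_csSup hbdd (Set.mem_image_of_mem f hz)

/-- Lemma 2.2(i) of the paper: for a `τ`-admissible distance function `f` with site `p`
on an open convex domain `𝒳`, if a Euclidean ball `B ⊆ 𝒳` is `(τκ)`-separated from `p`
for some `κ > 1`, then `f⁺(B) ≤ f⁻(B) · κ/(κ-1)`. -/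
theorem stmt0
    {d : ℕ} (𝒳 : Set (EuclideanSpace ℝ (Fin d)))
    (hopen : IsOpen 𝒳) (hconv : Convex ℝ 𝒳)
    (p : EuclideanSpace ℝ (Fin d)) (hp : p ∈ 𝒳)
    (f : EuclideanSpace ℝ (Fin d) → ℝ)
    (hsmooth : ContDiffOn ℝ 2 f 𝒳)
    (hnonneg : ∀ x ∈ 𝒳, 0 ≤ f x)
    (τ : ℝ) (hτ : 0 < τ)
    (hgrad : ∀ x ∈ 𝒳, ‖gradient f x‖ * ‖x - p‖ ≤ τ * f x)
    (hhess : ∀ x ∈ 𝒳, ‖fderiv ℝ (gradient f) x‖ * ‖x - p‖ ^ 2 ≤ τ ^ 2 * f x)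
    (c : EuclideanSpace ℝ (Fin d)) (r : ℝ) (hr : 0 < r)
    (hB : closedBall c r ⊆ 𝒳)
    (κ : ℝ) (hκ : 1 < κ)
    (hsep : infDist p (closedBall c r) / diam (closedBall c r) ≥ τ * κ) :
    sSup (f '' closedBall c r) ≤ sInf (f '' closedBall c r) * κ / (κ - 1) :=
  stmt0_general 𝒳 hopen p f hsmooth τ hτ hgrad c r hB κ hκ hsep
end

section
/- Let 𝒳 ⊆ ℝ^d be an open convex domain, p ∈ 𝒳 a site, f_p a τ-admissible distance function, and B ⊂ 𝒳 a Euclidean ball. If B and p are (τκ)-separated for some κ > 1, then for every x ∈ B, ‖∇f_p(x)‖ ≤ f_p⁺(B)/(κ · diam(B)). -/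
open Metric

section Separation

variable {α : Type*} [PseudoMetricSpace α] {p x : α} {s : Set α} {β : ℝ}

-- Only the junk value `a / 0 = 0` rules out `diam s = 0` (e.g. a singleton, or any ball when `d = 0`).
theorem diam_pos_of_le_infDist_div_diam (hβ : 0 < β) (h : β ≤ infDist p s / diam s) :
    0 < diam s := by
  rcases (diam_nonneg (s := s)).eq_or_lt with h0 | h0
  · rw [← h0, div_zero] at h
    linarith
  · exact h0

theorem mul_diam_le_dist_of_le_infDist_div_diam (hβ : 0 < β) (h : β ≤ infDist p s / diam s)
    (hx : x ∈ s) : β * diam s ≤ dist p x :=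
  calc β * diam s ≤ infDist p s := (le_div_iff₀ (diam_pos_of_le_infDist_div_diam hβ h)).1 h
    _ ≤ dist p x := infDist_le_dist_of_mem hx

end Separation

theorem stmt1_general
    {d : ℕ} (𝒳 : Set (EuclideanSpace ℝ (Fin d)))
    (p : EuclideanSpace ℝ (Fin d))
    (f : EuclideanSpace ℝ (Fin d) → ℝ)
    (hsmooth : ContDiffOn ℝ 2 f 𝒳)
    (τ : ℝ) (hτ : 0 < τ)
    (hgrad : ∀ x ∈ 𝒳, ‖gradient f x‖ * ‖x - p‖ ≤ τ * f x)
    (c : EuclideanSpace ℝ (Fin d)) (r : ℝ)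
    (hB : closedBall c r ⊆ 𝒳)
    (κ : ℝ) (hκ : 1 < κ)
    (hsep : infDist p (closedBall c r) / diam (closedBall c r) ≥ τ * κ) :
    ∀ x ∈ closedBall c r,
      ‖gradient f x‖ ≤ sSup (f '' closedBall c r) / (κ * diam (closedBall c r)) := by
  intro x hx
  have hκ₀ : 0 < κ := by linarith
  have hτκ : 0 < τ * κ := mul_pos hτ hκ₀
  have hdiam := diam_pos_of_le_infDist_div_diam hτκ hsep
  have hfar : τ * κ * diam (closedBall c r) ≤ ‖x - p‖ :=
    (mul_diam_le_dist_of_le_infDist_div_diam hτκ hsep hx).trans_eq (dist_eq_norm' p x)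
  have hfx : f x ≤ sSup (f '' closedBall c r) :=
    le_csSup ((isCompact_closedBall c r).bddAbove_image (hsmooth.continuousOn.mono hB))
      (Set.mem_image_of_mem f hx)
  rw [le_div_iff₀ (mul_pos hκ₀ hdiam)]
  refine le_of_mul_le_mul_left ?_ hτ
  calc τ * (‖gradient f x‖ * (κ * diam (closedBall c r)))
      = ‖gradient f x‖ * (τ * κ * diam (closedBall c r)) := by ring
    _ ≤ ‖gradient f x‖ * ‖x - p‖ := by gcongr
    _ ≤ τ * f x := hgrad x (hB hx)
    _ ≤ τ * sSup (f '' closedBall c r) := by gcongr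

/-- Lemma 2.2(ii) of the paper: for a `τ`-admissible distance function `f` with site `p`
on an open convex domain `𝒳`, if a Euclidean ball `B ⊆ 𝒳` is `(τκ)`-separated from `p`
for some `κ > 1`, then for every `x ∈ B`, `‖∇f(x)‖ ≤ f⁺(B) / (κ · diam B)`. -/
theorem stmt1
    {d : ℕ} (𝒳 : Set (EuclideanSpace ℝ (Fin d)))
    (hopen : IsOpen 𝒳) (hconv : Convex ℝ 𝒳)
    (p : EuclideanSpace ℝ (Fin d)) (hp : p ∈ 𝒳)
    (f : EuclideanSpace ℝ (Fin d) → ℝ)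
    (hsmooth : ContDiffOn ℝ 2 f 𝒳)
    (hnonneg : ∀ x ∈ 𝒳, 0 ≤ f x)
    (τ : ℝ) (hτ : 0 < τ)
    (hgrad : ∀ x ∈ 𝒳, ‖gradient f x‖ * ‖x - p‖ ≤ τ * f x)
    (hhess : ∀ x ∈ 𝒳, ‖fderiv ℝ (gradient f) x‖ * ‖x - p‖ ^ 2 ≤ τ ^ 2 * f x)
    (c : EuclideanSpace ℝ (Fin d)) (r : ℝ) (hr : 0 < r)
    (hB : closedBall c r ⊆ 𝒳)
    (κ : ℝ) (hκ : 1 < κ)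
    (hsep : infDist p (closedBall c r) / diam (closedBall c r) ≥ τ * κ) :
    ∀ x ∈ closedBall c r,
      ‖gradient f x‖ ≤ sSup (f '' closedBall c r) / (κ * diam (closedBall c r)) :=
  stmt1_general 𝒳 p f hsmooth τ hτ hgrad c r hB κ hκ hsep
end

section
/- Let f be a τ-admissible scaling distance function with site p and unit ball K, let B be a Euclidean ball containing p with center p′, and let x be a point that is β-separated from B for some β ≥ 2τ. Define the perturbed function f′(x) = f(x + p − p′) (the scaling distance function with the same unit ball K but with site p′, which is also τ-admissible). Then |f′(x) − f(x)| / f(x) ≤ 2τ/β. -/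
open Metric

/-!
Write `g` for the gauge of `K`, so `f = g (· - p)` and `f' = g (· - p')`. Every point `z` of the
segment from `x - p` to `x - p'` has the form `x - q` with `q ∈ B`, so `‖z‖ ≥ β · diam B`, while
the segment has length `‖p - p'‖ ≤ diam B`. The admissibility bound `‖∇g(z)‖ ≤ τ g(z) / ‖z‖`
and the mean value theorem then give `|g(z) - g(x - p)| ≤ (τ/β) M` along the segment, `M` being
the maximum of `g` there. As `τ/β ≤ 1/2`, taking `z` at the maximum yields `M ≤ 2 g(x - p)`,
and taking `z = x - p'` yields the claim.
-/

section SelfBoundedDerivative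

variable {E : Type*} [NormedAddCommGroup E] [NormedSpace ℝ E] {g : E → ℝ} {τ ρ δ M : ℝ}
  {z₀ z₁ : E}

lemma abs_sub_le_of_norm_fderiv_mul_norm_le (hτ : 0 ≤ τ) (hρ : 0 < ρ) (hδ : ‖z₁ - z₀‖ ≤ δ)
    (hfar : ∀ z ∈ segment ℝ z₀ z₁, ρ ≤ ‖z‖)
    (hdiff : ∀ z ∈ segment ℝ z₀ z₁, DifferentiableAt ℝ g z)
    (hgrad : ∀ z ∈ segment ℝ z₀ z₁, ‖fderiv ℝ g z‖ * ‖z‖ ≤ τ * g z)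
    (hM : ∀ z ∈ segment ℝ z₀ z₁, g z ≤ M) (hM₀ : 0 ≤ M) {z : E} (hz : z ∈ segment ℝ z₀ z₁) :
    |g z - g z₀| ≤ τ * δ / ρ * M := by
  have hderiv : ∀ y ∈ segment ℝ z₀ z₁, ‖fderiv ℝ g y‖ ≤ τ * M / ρ := by
    intro y hy
    have hy₀ : 0 < ‖y‖ := hρ.trans_le (hfar y hy)
    calc ‖fderiv ℝ g y‖ ≤ τ * g y / ‖y‖ := by rw [le_div_iff₀ hy₀]; exact hgrad y hy
      _ ≤ τ * g y / ρ :=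
        div_le_div_of_nonneg_left
          ((mul_nonneg (norm_nonneg _) (norm_nonneg _)).trans (hgrad y hy)) hρ (hfar y hy)
      _ ≤ τ * M / ρ := by gcongr; exact hM y hy
  calc |g z - g z₀| ≤ τ * M / ρ * ‖z - z₀‖ :=
        (convex_segment z₀ z₁).norm_image_sub_le_of_norm_fderiv_le hdiff hderiv
          (left_mem_segment ℝ z₀ z₁) hz
    _ ≤ τ * M / ρ * δ := by gcongr; exact (norm_sub_le_of_mem_segment hz).trans hδ
    _ = τ * δ / ρ * M := by ring

lemma abs_sub_le_mul_of_norm_fderiv_mul_norm_le (hτ : 0 < τ) (hρ : 0 < ρ)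
    (hδ : ‖z₁ - z₀‖ ≤ δ) (hτδ : 2 * τ * δ ≤ ρ)
    (hfar : ∀ z ∈ segment ℝ z₀ z₁, ρ ≤ ‖z‖)
    (hdiff : ∀ z ∈ segment ℝ z₀ z₁, DifferentiableAt ℝ g z)
    (hgrad : ∀ z ∈ segment ℝ z₀ z₁, ‖fderiv ℝ g z‖ * ‖z‖ ≤ τ * g z) :
    |g z₁ - g z₀| ≤ 2 * τ * δ / ρ * g z₀ := by
  have hcont : ContinuousOn g (segment ℝ z₀ z₁) := fun z hz =>
    (hdiff z hz).continuousAt.continuousWithinAt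
  have hcompact : IsCompact (segment ℝ z₀ z₁) :=
    convexHull_pair (𝕜 := ℝ) z₀ z₁ ▸ (Set.toFinite {z₀, z₁}).isCompact_convexHull ℝ
  obtain ⟨w, hw, hmax⟩ := hcompact.exists_isMaxOn ⟨z₀, left_mem_segment ℝ z₀ z₁⟩ hcont
  have hw₀ : 0 ≤ g w := nonneg_of_mul_nonneg_right
    ((mul_nonneg (norm_nonneg _) (norm_nonneg _)).trans (hgrad w hw)) hτ
  have hclose : ∀ z ∈ segment ℝ z₀ z₁, |g z - g z₀| ≤ τ * δ / ρ * g w := fun z hz =>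
    abs_sub_le_of_norm_fderiv_mul_norm_le hτ.le hρ hδ hfar hdiff hgrad (fun y hy => hmax hy) hw₀ hz
  have hε : τ * δ / ρ ≤ 1 / 2 := by rw [div_le_iff₀ hρ]; linarith
  have hε₀ : 0 ≤ τ * δ / ρ :=
    div_nonneg (mul_nonneg hτ.le ((norm_nonneg _).trans hδ)) hρ.le
  have hmax_le : g w ≤ 2 * g z₀ := by
    have := (le_abs_self _).trans (hclose w hw)
    nlinarith
  calc |g z₁ - g z₀| ≤ τ * δ / ρ * g w := hclose z₁ (right_mem_segment ℝ z₀ z₁)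
    _ ≤ τ * δ / ρ * (2 * g z₀) := by gcongr
    _ = 2 * τ * δ / ρ * g z₀ := by ring

end SelfBoundedDerivative

lemma norm_gradient_comp_sub {F : Type*} [NormedAddCommGroup F] [InnerProductSpace ℝ F]
    [CompleteSpace F] (f : F → ℝ) (p x : F) :
    ‖gradient (fun y => f (y - p)) x‖ = ‖fderiv ℝ f (x - p)‖ := by
  rw [gradient, fderiv_comp_sub, LinearIsometryEquiv.norm_map]

lemma infDist_le_norm_of_mem_segment_sub {F : Type*} [NormedAddCommGroup F] [NormedSpace ℝ F]
    {B : Set F} (hB : Convex ℝ B) {p p' : F} (hp : p ∈ B) (hp' : p' ∈ B) {x z : F}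
    (hz : z ∈ segment ℝ (x - p) (x - p')) : infDist x B ≤ ‖z‖ := by
  obtain ⟨a, b, ha, hb, hab, rfl⟩ := hz
  have hq : x - (a • (x - p) + b • (x - p')) = a • p + b • p' := by
    calc x - (a • (x - p) + b • (x - p')) = (a + b) • x - (a • (x - p) + b • (x - p')) := by
          rw [hab, one_smul]
      _ = a • p + b • p' := by module
  calc infDist x B ≤ dist x (a • p + b • p') := infDist_le_dist_of_mem (hB hp hp' ha hb hab)
    _ = ‖a • (x - p) + b • (x - p')‖ := by rw [dist_eq_norm, ← hq, sub_sub_cancel]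

theorem stmt4_general
    {d : ℕ} (K : Set (EuclideanSpace ℝ (Fin d)))
    (τ : ℝ) (hτ : 0 < τ)
    (p p' : EuclideanSpace ℝ (Fin d)) (r : ℝ)
    (hp : p ∈ closedBall p' r)
    (hdiff : ∀ z : EuclideanSpace ℝ (Fin d), z ≠ 0 → ContDiffAt ℝ 2 (gauge K) z)
    (hgrad : ∀ x, x ≠ p →
      ‖gradient (fun y => gauge K (y - p)) x‖ * ‖x - p‖ ≤ τ * gauge K (x - p))
    (β : ℝ) (hβ : 2 * τ ≤ β)
    (x : EuclideanSpace ℝ (Fin d))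
    (hsep : infDist x (closedBall p' r) / diam (closedBall p' r) ≥ β) :
    |gauge K (x - p') - gauge K (x - p)| / gauge K (x - p) ≤ 2 * τ / β := by
  set B := closedBall p' r
  have hβ₀ : 0 < β := by linarith
  have hp' : p' ∈ B := mem_closedBall_self (dist_nonneg.trans hp)
  have hdiam : 0 < diam B := by
    refine diam_nonneg.lt_of_ne fun h => ?_
    rw [← h, div_zero] at hsep
    linarith
  have hfar : ∀ z ∈ segment ℝ (x - p) (x - p'), β * diam B ≤ ‖z‖ := fun z hz =>
    ((le_div_iff₀ hdiam).mp hsep).trans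
      (infDist_le_norm_of_mem_segment_sub (convex_closedBall p' r) hp hp' hz)
  have hne : ∀ z ∈ segment ℝ (x - p) (x - p'), z ≠ 0 := fun z hz =>
    norm_pos_iff.mp ((mul_pos hβ₀ hdiam).trans_le (hfar z hz))
  have hgauge : ∀ z ∈ segment ℝ (x - p) (x - p'), ‖fderiv ℝ (gauge K) z‖ * ‖z‖ ≤ τ * gauge K z :=
    fun z hz => by
      simpa only [norm_gradient_comp_sub, add_sub_cancel_right] using
        hgrad (z + p) (by simpa using hne z hz)
  have hlen : ‖(x - p') - (x - p)‖ ≤ diam B := by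
    rw [sub_sub_sub_cancel_left, ← dist_eq_norm]
    exact dist_le_diam_of_mem isBounded_closedBall hp hp'
  have hbound := abs_sub_le_mul_of_norm_fderiv_mul_norm_le hτ (mul_pos hβ₀ hdiam) hlen
    (mul_le_mul_of_nonneg_right hβ hdiam.le) hfar
    (fun z hz => (hdiff z (hne z hz)).differentiableAt two_ne_zero) hgauge
  rw [mul_div_mul_right _ _ hdiam.ne'] at hbound
  exact div_le_of_le_mul₀ (gauge_nonneg _) (by positivity) hbound

/-- Lemma 4.3 of the paper (perturbation): let `f = gauge K (· - p)` be a `τ`-admissible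
scaling distance function whose unit ball is the convex body `K`, let `B` be a Euclidean
ball with center `p'` containing `p`, and let `x` be `β`-separated from `B` for `β ≥ 2τ`.
With `f' (x) = f (x + p - p') = gauge K (x - p')`, we have `|f'(x) - f(x)| / f(x) ≤ 2τ/β`. -/
theorem stmt4
    {d : ℕ} (K : Set (EuclideanSpace ℝ (Fin d)))
    (hKconv : Convex ℝ K) (hKcl : IsClosed K) (hKbd : Bornology.IsBounded K)
    (hK0 : (0 : EuclideanSpace ℝ (Fin d)) ∈ interior K)
    (τ : ℝ) (hτ : 0 < τ)
    (p p' : EuclideanSpace ℝ (Fin d)) (r : ℝ)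
    (hp : p ∈ closedBall p' r)
    (hdiff : ∀ z : EuclideanSpace ℝ (Fin d), z ≠ 0 → ContDiffAt ℝ 2 (gauge K) z)
    (hgrad : ∀ x, x ≠ p →
      ‖gradient (fun y => gauge K (y - p)) x‖ * ‖x - p‖ ≤ τ * gauge K (x - p))
    (hhess : ∀ x, x ≠ p →
      ‖fderiv ℝ (gradient (fun y => gauge K (y - p))) x‖ * ‖x - p‖ ^ 2
        ≤ τ ^ 2 * gauge K (x - p))
    (β : ℝ) (hβ : 2 * τ ≤ β)
    (x : EuclideanSpace ℝ (Fin d))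
    (hsep : infDist x (closedBall p' r) / diam (closedBall p' r) ≥ β) :
    |gauge K (x - p') - gauge K (x - p)| / gauge K (x - p) ≤ 2 * τ / β :=
  stmt4_general K τ hτ p p' r hp hdiff hgrad β hβ x hsep
end

section
/- Let K ⊂ ℝ^d be a closed convex body containing the origin in its interior that is centrally γ-fat, and let f_p be the scaling distance function with site p ∈ ℝ^d and unit ball K, assumed differentiable at every x ≠ p. Then for all x ≠ p, ‖∇f_p(x)‖ · ‖x − p‖ ≤ f_p(x) / γ. -/
/-! If `K` contains the ball of radius `r`, then `f_p` is `1/r`-Lipschitz, so `‖∇f_p‖ ≤ 1/r`;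
if `K` lies in the ball of radius `R`, then `‖x - p‖ ≤ R f_p(x)`. Multiplying, the product is
at most `(R/r) f_p(x) ≤ f_p(x)/γ`. -/

open Metric

/-- `K` is centrally `γ`-fat: it is sandwiched between two Euclidean balls centered at the
origin whose radii are within a factor `γ` of each other. -/
def CentrallyFat {d : ℕ} (γ : ℝ) (K : Set (EuclideanSpace ℝ (Fin d))) : Prop :=
  ∃ r R : ℝ, 0 < r ∧ closedBall 0 r ⊆ K ∧ K ⊆ closedBall 0 R ∧ γ ≤ r / R

theorem Convex.lipschitzWith_gauge_sub {E : Type*} [SeminormedAddCommGroup E] [NormedSpace ℝ E]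
    {s : Set E} (hc : Convex ℝ s) {r : NNReal} (hr : 0 < r) (hs : ball (0 : E) r ⊆ s) (p : E) :
    LipschitzWith r⁻¹ fun y => gauge s (y - p) := by
  have := (hc.lipschitzWith_gauge hr hs).comp (IsometryEquiv.subRight p).isometry.lipschitz
  rwa [mul_one] at this

section Gradient

variable {E : Type*} [NormedAddCommGroup E] [InnerProductSpace ℝ E] [CompleteSpace E]

theorem LipschitzWith.norm_gradient_le {f : E → ℝ} {C : NNReal} (hf : LipschitzWith C f)
    (x : E) : ‖gradient f x‖ ≤ C := by
  rw [gradient, LinearIsometryEquiv.norm_map]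
  exact norm_fderiv_le_of_lipschitz ℝ hf

theorem Convex.norm_gradient_gauge_sub_mul_norm_le {s : Set E} (hc : Convex ℝ s) {r R : ℝ}
    (hr : 0 < r) (hR : 0 < R) (hrs : ball 0 r ⊆ s) (hsR : s ⊆ closedBall 0 R) (p x : E) :
    ‖gradient (fun y => gauge s (y - p)) x‖ * ‖x - p‖ ≤ R / r * gauge s (x - p) := by
  have hgrad : ‖gradient (fun y => gauge s (y - p)) x‖ ≤ r⁻¹ :=
    ((hc.lipschitzWith_gauge_sub (r := ⟨r, hr.le⟩) hr hrs p).norm_gradient_le x).trans_eq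
      (NNReal.coe_inv _)
  have hnorm : ‖x - p‖ ≤ R * gauge s (x - p) := by
    rw [← div_le_iff₀' hR]
    exact le_gauge_of_subset_closedBall ((absorbent_ball_zero hr).mono hrs) hR.le hsR
  calc ‖gradient (fun y => gauge s (y - p)) x‖ * ‖x - p‖
      ≤ r⁻¹ * (R * gauge s (x - p)) := by gcongr
    _ = R / r * gauge s (x - p) := by ring

end Gradient

theorem stmt5_general
    {d : ℕ} (K : Set (EuclideanSpace ℝ (Fin d)))
    (hKconv : Convex ℝ K)
    (γ : ℝ) (hγ0 : 0 < γ) (hfat : CentrallyFat γ K)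
    (p : EuclideanSpace ℝ (Fin d)) :
    ∀ x, x ≠ p →
      ‖gradient (fun y => gauge K (y - p)) x‖ * ‖x - p‖ ≤ gauge K (x - p) / γ := by
  obtain ⟨r, R, hr, hrK, hKR, hγrR⟩ := hfat
  intro x _
  have hR : 0 < R := by
    by_contra! hR
    linarith [div_nonpos_of_nonneg_of_nonpos hr.le hR]
  calc ‖gradient (fun y => gauge K (y - p)) x‖ * ‖x - p‖
      ≤ R / r * gauge K (x - p) :=
        hKconv.norm_gradient_gauge_sub_mul_norm_le hr hR (ball_subset_closedBall.trans hrK) hKR p x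
    _ = gauge K (x - p) / (r / R) := by field_simp
    _ ≤ gauge K (x - p) / γ := div_le_div_of_nonneg_left (gauge_nonneg _) hγ0 hγrR

/-- First half of Lemma 6.2 of the paper: if the unit ball `K` of the scaling distance
function `f_p = gauge K (· - p)` is centrally `γ`-fat, then at every point `x ≠ p` of
differentiability, `‖∇f_p(x)‖ · ‖x − p‖ ≤ f_p(x) / γ`. -/
theorem stmt5
    {d : ℕ} (K : Set (EuclideanSpace ℝ (Fin d)))
    (hKconv : Convex ℝ K) (hKcl : IsClosed K) (hKbd : Bornology.IsBounded K)
    (hK0 : (0 : EuclideanSpace ℝ (Fin d)) ∈ interior K)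
    (γ : ℝ) (hγ0 : 0 < γ) (hγ1 : γ ≤ 1) (hfat : CentrallyFat γ K)
    (p : EuclideanSpace ℝ (Fin d))
    (hdiff : ∀ x, x ≠ p → DifferentiableAt ℝ (fun y => gauge K (y - p)) x) :
    ∀ x, x ≠ p →
      ‖gradient (fun y => gauge K (y - p)) x‖ * ‖x - p‖ ≤ gauge K (x - p) / γ :=
  stmt5_general K hKconv γ hγ0 hfat p
end

section
/- For any real c ≥ 1 and any p ∈ ℝ^d, the distance function f_p(x) = ‖x − p‖^c (Euclidean norm raised to the power c) is c-admissible on ℝ^d \ {p}: for all x ≠ p, ‖∇f_p(x)‖·‖x − p‖ ≤ c·f_p(x) and ‖∇²f_p(x)‖·‖x − p‖² ≤ c²·f_p(x). -/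
/-!
Away from `p`, the gradient of `‖y - p‖ ^ c` is the radial field `c ‖y - p‖ ^ (c - 2) • (y - p)`,
whose derivative at `x` is `α • id + β • ⟪u, ·⟫ u` with `u = x - p`, `r = ‖u‖`,
`α = c r ^ (c - 2)` and `β = c (c - 2) r ^ (c - 4)`. This operator acts as `α` on `u⊥` and as
`α + β r² = c (c - 1) r ^ (c - 2)` on `u`, so for `c ≥ 1` its norm is at most `c² r ^ (c - 2)`.
-/

open Topology RealInnerProductSpace

theorem Real.rpow_sub_two_mul_sq {r : ℝ} (hr : 0 < r) (a : ℝ) : r ^ (a - 2) * r ^ 2 = r ^ a := by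
  rw [← Real.rpow_natCast, ← Real.rpow_add hr]
  norm_num

section

variable {E : Type*} [NormedAddCommGroup E] [InnerProductSpace ℝ E]

theorem hasFDerivAt_norm_rpow_of_ne_zero (a : ℝ) {x : E} (hx : x ≠ 0) :
    HasFDerivAt (fun y : E ↦ ‖y‖ ^ a) ((a * ‖x‖ ^ (a - 2)) • innerSL ℝ x) x := by
  convert! ((hasStrictFDerivAt_norm_sq x).rpow_const (p := a / 2) (by simp [hx])).hasFDerivAt
    using 0
  simp_rw [← Real.rpow_natCast_mul (norm_nonneg _), ← Nat.cast_smul_eq_nsmul ℝ, smul_smul]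
  ring_nf

theorem hasFDerivAt_norm_sub_rpow (a : ℝ) {x p : E} (hx : x ≠ p) :
    HasFDerivAt (fun y : E ↦ ‖y - p‖ ^ a) ((a * ‖x - p‖ ^ (a - 2)) • innerSL ℝ (x - p)) x := by
  simpa only [Function.comp_def, id_eq, ContinuousLinearMap.comp_id] using
    (hasFDerivAt_norm_rpow_of_ne_zero a (sub_ne_zero.2 hx)).comp x ((hasFDerivAt_id x).sub_const p)

theorem hasFDerivAt_mul_norm_sub_rpow_smul_sub (a : ℝ) {x p : E} (hx : x ≠ p) :
    HasFDerivAt (fun y : E ↦ (a * ‖y - p‖ ^ (a - 2)) • (y - p))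
      ((a * ‖x - p‖ ^ (a - 2)) • ContinuousLinearMap.id ℝ E
        + (a * (a - 2) * ‖x - p‖ ^ (a - 4)) • (innerSL ℝ (x - p)).smulRight (x - p)) x := by
  convert ((hasFDerivAt_norm_sub_rpow (a - 2) hx).const_mul a).fun_smul
    ((hasFDerivAt_id x).sub_const p) using 1
  · rfl
  congr 1
  ext v
  simp only [smul_apply, ContinuousLinearMap.smulRight_apply, innerSL_apply_apply, id_eq,
    smul_smul]
  ring_nf

theorem norm_smul_id_add_smul_smulRight_innerSL_le (α β : ℝ) (u : E) :
    ‖α • ContinuousLinearMap.id ℝ E + β • (innerSL ℝ u).smulRight u‖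
      ≤ max |α| |α + β * ‖u‖ ^ 2| := by
  refine ContinuousLinearMap.opNorm_le_bound _ (by positivity) fun v ↦ ?_
  have hexpand : ‖(α • ContinuousLinearMap.id ℝ E + β • (innerSL ℝ u).smulRight u) v‖ ^ 2
      = α ^ 2 * ‖v‖ ^ 2 + β * (2 * α + β * ‖u‖ ^ 2) * ⟪u, v⟫ ^ 2 := by
    simp only [add_apply, smul_apply, ContinuousLinearMap.id_apply,
      ContinuousLinearMap.smulRight_apply, innerSL_apply_apply, smul_smul]
    rw [norm_add_sq_real, norm_smul, norm_smul, real_inner_smul_left, real_inner_smul_right,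
      real_inner_comm, mul_pow, mul_pow, Real.norm_eq_abs, Real.norm_eq_abs, sq_abs, sq_abs]
    ring
  have hCS : ⟪u, v⟫ ^ 2 ≤ ‖u‖ ^ 2 * ‖v‖ ^ 2 := by
    rw [← mul_pow, ← sq_abs]
    exact pow_le_pow_left₀ (abs_nonneg _) (abs_real_inner_le_norm u v) 2
  refine le_of_sq_le_sq (hexpand ▸ ?_) (by positivity)
  rcases le_total 0 (β * (2 * α + β * ‖u‖ ^ 2)) with h | h
  · calc _ ≤ α ^ 2 * ‖v‖ ^ 2 + β * (2 * α + β * ‖u‖ ^ 2) * (‖u‖ ^ 2 * ‖v‖ ^ 2) := by gcongr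
      _ = (|α + β * ‖u‖ ^ 2| * ‖v‖) ^ 2 := by rw [mul_pow, sq_abs]; ring
      _ ≤ _ := by gcongr; exact le_max_right _ _
  · calc _ ≤ (|α| * ‖v‖) ^ 2 := by rw [mul_pow, sq_abs]; nlinarith [sq_nonneg ⟪u, v⟫]
      _ ≤ _ := by gcongr; exact le_max_left _ _

variable [CompleteSpace E]

theorem hasGradientAt_norm_sub_rpow (a : ℝ) {x p : E} (hx : x ≠ p) :
    HasGradientAt (fun y : E ↦ ‖y - p‖ ^ a) ((a * ‖x - p‖ ^ (a - 2)) • (x - p)) x := by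
  rw [hasGradientAt_iff_hasFDerivAt, map_smul]
  exact hasFDerivAt_norm_sub_rpow a hx

theorem fderiv_gradient_norm_sub_rpow (a : ℝ) {x p : E} (hx : x ≠ p) :
    fderiv ℝ (gradient fun y : E ↦ ‖y - p‖ ^ a) x
      = (a * ‖x - p‖ ^ (a - 2)) • ContinuousLinearMap.id ℝ E
        + (a * (a - 2) * ‖x - p‖ ^ (a - 4)) • (innerSL ℝ (x - p)).smulRight (x - p) := by
  have hgrad : (gradient fun y : E ↦ ‖y - p‖ ^ a)
      =ᶠ[𝓝 x] fun y ↦ (a * ‖y - p‖ ^ (a - 2)) • (y - p) := by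
    filter_upwards [eventually_ne_nhds hx] with y hy
    exact (hasGradientAt_norm_sub_rpow a hy).gradient
  rw [hgrad.fderiv_eq, (hasFDerivAt_mul_norm_sub_rpow_smul_sub a hx).fderiv]

theorem norm_gradient_norm_sub_rpow_mul {c : ℝ} (hc : 0 ≤ c) {x p : E} (hx : x ≠ p) :
    ‖gradient (fun y : E ↦ ‖y - p‖ ^ c) x‖ * ‖x - p‖ = c * ‖x - p‖ ^ c := by
  have hr : 0 < ‖x - p‖ := norm_pos_iff.2 (sub_ne_zero.2 hx)
  rw [(hasGradientAt_norm_sub_rpow c hx).gradient, norm_smul, Real.norm_of_nonneg (by positivity),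
    ← Real.rpow_sub_two_mul_sq hr c]
  ring

theorem norm_fderiv_gradient_norm_sub_rpow_le {c : ℝ} (hc : 1 ≤ c) {x p : E} (hx : x ≠ p) :
    ‖fderiv ℝ (gradient fun y : E ↦ ‖y - p‖ ^ c) x‖ ≤ c ^ 2 * ‖x - p‖ ^ (c - 2) := by
  have hr : 0 < ‖x - p‖ := norm_pos_iff.2 (sub_ne_zero.2 hx)
  have hc1 : 0 ≤ c - 1 := sub_nonneg.2 hc
  have hradial : c * ‖x - p‖ ^ (c - 2) + c * (c - 2) * ‖x - p‖ ^ (c - 4) * ‖x - p‖ ^ 2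
      = c * (c - 1) * ‖x - p‖ ^ (c - 2) := by
    rw [mul_assoc _ (‖x - p‖ ^ (c - 4)), show c - 4 = c - 2 - 2 by ring,
      Real.rpow_sub_two_mul_sq hr]
    ring
  rw [fderiv_gradient_norm_sub_rpow c hx]
  refine (norm_smul_id_add_smul_smulRight_innerSL_le _ _ _).trans (max_le ?_ ?_)
  · rw [abs_of_nonneg (by positivity)]
    gcongr
    nlinarith
  · rw [hradial, abs_of_nonneg (by positivity)]
    gcongr
    nlinarith

end

/-- The distance function `f_p(x) = ‖x − p‖^c` (Euclidean norm to the real power `c ≥ 1`)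
is `c`-admissible away from its site `p`: for all `x ≠ p`,
`‖∇f_p(x)‖·‖x − p‖ ≤ c·f_p(x)` and `‖∇²f_p(x)‖·‖x − p‖² ≤ c²·f_p(x)`. -/
theorem stmt9
    {d : ℕ} (c : ℝ) (hc : 1 ≤ c) (p : EuclideanSpace ℝ (Fin d)) :
    ∀ x, x ≠ p →
      ‖gradient (fun y : EuclideanSpace ℝ (Fin d) => ‖y - p‖ ^ c) x‖ * ‖x - p‖
          ≤ c * ‖x - p‖ ^ c ∧
      ‖fderiv ℝ (gradient (fun y : EuclideanSpace ℝ (Fin d) => ‖y - p‖ ^ c)) x‖ * ‖x - p‖ ^ 2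
          ≤ c ^ 2 * ‖x - p‖ ^ c := by
  intro x hx
  have hr : 0 < ‖x - p‖ := norm_pos_iff.2 (sub_ne_zero.2 hx)
  refine ⟨(norm_gradient_norm_sub_rpow_mul (by linarith) hx).le, ?_⟩
  calc _ ≤ c ^ 2 * ‖x - p‖ ^ (c - 2) * ‖x - p‖ ^ 2 := by
        gcongr; exact norm_fderiv_gradient_norm_sub_rpow_le hc hx
    _ = c ^ 2 * ‖x - p‖ ^ c := by rw [mul_assoc, Real.rpow_sub_two_mul_sq hr]
end

section
/- Any μ-similar Bregman divergence over an open convex domain 𝒳 ⊆ ℝ^d is 2μ-admissible: for all q, p ∈ 𝒳, ‖∇F(q) − ∇F(p)‖·‖q − p‖ ≤ 2μ·D_F(q, p) and ‖∇²F(q)‖·‖q − p‖² ≤ (2μ)²·D_F(q, p). -/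
/-!
Adding the two similarity bounds for `D_F(q, p)` and `D_F(p, q)` gives
`2‖q - p‖² ≤ ⟪∇F q - ∇F p, q - p⟫ ≤ 2μ‖q - p‖²`. Letting `q → p` along a line, the quadratic
form of the Hessian `∇²F p` takes values in `[0, 2μ]` on unit vectors; being symmetric, its operator
norm is then at most `2μ`. By the mean value inequality `∇F` is `2μ`-Lipschitz on the convex
set `𝒳`, and both admissibility bounds follow from `‖q - p‖² ≤ D_F(q, p)`.
-/

open scoped RealInnerProductSpace

/-- The Bregman divergence of `F`: `D_F(q, p) = F(q) − F(p) − ⟨∇F(p), q − p⟩`. -/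
noncomputable def breg {d : ℕ} (F : EuclideanSpace ℝ (Fin d) → ℝ)
    (q p : EuclideanSpace ℝ (Fin d)) : ℝ :=
  F q - F p - ⟪gradient F p, q - p⟫

open InnerProductSpace Filter Topology

theorem ContinuousLinearMap.norm_le_of_abs_inner_apply_self_le {E : Type*} [NormedAddCommGroup E]
    [InnerProductSpace ℝ E] {T : E →L[ℝ] E} (hT : T.IsSymmetric) {c : ℝ} (hc : 0 ≤ c)
    (h : ∀ v, |⟪T v, v⟫| ≤ c * ‖v‖ ^ 2) : ‖T‖ ≤ c := by
  rw [T.norm_eq_iSup_rayleighQuotient hT]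
  refine ciSup_le fun v => ?_
  rcases eq_or_ne v 0 with rfl | hv
  · simpa using hc
  · rw [rayleighQuotient, reApplyInnerSelf_apply, RCLike.re_to_real, abs_div, abs_sq,
      div_le_iff₀ (by positivity)]
    exact h v

theorem abs_inner_apply_self_le_of_hasFDerivAt {E : Type*} [NormedAddCommGroup E]
    [InnerProductSpace ℝ E] {G : E → E} {A : E →L[ℝ] E} {x : E} {c : ℝ} (hG : HasFDerivAt G A x)
    (h : ∀ᶠ y in 𝓝 x, |⟪G y - G x, y - x⟫| ≤ c * ‖y - x‖ ^ 2) (v : E) :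
    |⟪A v, v⟫| ≤ c * ‖v‖ ^ 2 := by
  have hline : HasDerivAt (fun t : ℝ => x + t • v) v 0 := by
    simpa using ((hasDerivAt_id (0 : ℝ)).smul_const v).const_add x
  have hderiv : HasDerivAt (fun t : ℝ => G (x + t • v)) (A v) 0 :=
    (by simpa using hG : HasFDerivAt G A (x + (0 : ℝ) • v)).comp_hasDerivAt 0 hline
  have hlim : Tendsto (fun t => |⟪slope (fun t : ℝ => G (x + t • v)) 0 t, v⟫|) (𝓝[≠] 0)
      (𝓝 |⟪A v, v⟫|) :=
    ((hasDerivAt_iff_tendsto_slope.mp hderiv).inner tendsto_const_nhds).abs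
  refine le_of_tendsto hlim ?_
  have hnear : ∀ᶠ t in 𝓝 (0 : ℝ), |⟪G (x + t • v) - G x, t • v⟫| ≤ c * ‖t • v‖ ^ 2 := by
    have := hline.continuousAt.tendsto.eventually (by simpa using h)
    simpa using this
  -- `⟪slope _ 0 t, v⟫ = ⟪G (x + t • v) - G x, t • v⟫ / t ^ 2`
  filter_upwards [nhdsWithin_le_nhds hnear, self_mem_nhdsWithin] with t ht (ht0 : t ≠ 0)
  rw [real_inner_smul_right, abs_mul, norm_smul, mul_pow, Real.norm_eq_abs, sq_abs] at ht
  rw [slope_def_module, zero_smul, add_zero, sub_zero, real_inner_smul_left, abs_mul, abs_inv,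
    inv_mul_le_iff₀ (abs_pos.mpr ht0)]
  rw [← sq_abs t, sq, mul_assoc, mul_left_comm, mul_left_comm c] at ht
  exact le_of_mul_le_mul_left ht (abs_pos.mpr ht0)

section Gradient

variable {E : Type*} [NormedAddCommGroup E] [InnerProductSpace ℝ E] [CompleteSpace E]
  {F : E → ℝ} {x : E}

theorem inner_fderiv_gradient_apply (v w : E) :
    ⟪fderiv ℝ (gradient F) x v, w⟫ = fderiv ℝ (fderiv ℝ F) x v w := by
  change ⟪fderiv ℝ ((toDual ℝ E).symm ∘ fderiv ℝ F) x v, w⟫ = _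
  rw [(toDual ℝ E).symm.comp_fderiv]
  exact toDual_symm_apply

theorem ContDiffAt.differentiableAt_gradient (hF : ContDiffAt ℝ 2 F x) :
    DifferentiableAt ℝ (gradient F) x :=
  (toDual ℝ E).symm.differentiableAt.comp x
    ((hF.fderiv_right (m := 1) le_rfl).differentiableAt one_ne_zero)

theorem ContDiffAt.isSymmetric_fderiv_gradient (hF : ContDiffAt ℝ 2 F x) :
    (fderiv ℝ (gradient F) x).IsSymmetric := fun v w => by
  rw [ContinuousLinearMap.coe_coe, real_inner_comm _ v, inner_fderiv_gradient_apply,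
    inner_fderiv_gradient_apply, hF.isSymmSndFDerivAt (by simp)]

theorem norm_fderiv_gradient_le_of_abs_inner_le {s : Set E} (hs : IsOpen s)
    (hF : ContDiffOn ℝ 2 F s) {c : ℝ} (hc : 0 ≤ c)
    (h : ∀ x ∈ s, ∀ y ∈ s, |⟪gradient F y - gradient F x, y - x⟫| ≤ c * ‖y - x‖ ^ 2)
    (hx : x ∈ s) : ‖fderiv ℝ (gradient F) x‖ ≤ c :=
  have hFx := hF.contDiffAt (hs.mem_nhds hx)
  ContinuousLinearMap.norm_le_of_abs_inner_apply_self_le hFx.isSymmetric_fderiv_gradient hc <|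
    abs_inner_apply_self_le_of_hasFDerivAt hFx.differentiableAt_gradient.hasFDerivAt
      (eventually_of_mem (hs.mem_nhds hx) (h x hx))

end Gradient

theorem breg_add_breg {d : ℕ} (F : EuclideanSpace ℝ (Fin d) → ℝ)
    (q p : EuclideanSpace ℝ (Fin d)) :
    breg F q p + breg F p q = ⟪gradient F q - gradient F p, q - p⟫ := by
  simp only [breg, inner_sub_left, inner_sub_right]
  ring

theorem abs_inner_gradient_sub_gradient_le {d : ℕ} {F : EuclideanSpace ℝ (Fin d) → ℝ}
    {q p : EuclideanSpace ℝ (Fin d)} {μ : ℝ}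
    (hqp : ‖q - p‖ ^ 2 ≤ breg F q p ∧ breg F q p ≤ μ * ‖q - p‖ ^ 2)
    (hpq : ‖p - q‖ ^ 2 ≤ breg F p q ∧ breg F p q ≤ μ * ‖p - q‖ ^ 2) :
    |⟪gradient F q - gradient F p, q - p⟫| ≤ 2 * μ * ‖q - p‖ ^ 2 := by
  rw [norm_sub_rev p q] at hpq
  rw [← breg_add_breg, abs_le]
  constructor <;> nlinarith [sq_nonneg ‖q - p‖]

theorem stmt15_general
    {d : ℕ} (𝒳 : Set (EuclideanSpace ℝ (Fin d)))
    (hopen : IsOpen 𝒳) (hconv : Convex ℝ 𝒳)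
    (F : EuclideanSpace ℝ (Fin d) → ℝ)
    (hF : ContDiffOn ℝ 2 F 𝒳)
    (μ : ℝ) (hμ : 1 ≤ μ)
    (hsim : ∀ p ∈ 𝒳, ∀ q ∈ 𝒳, ‖q - p‖ ^ 2 ≤ breg F q p ∧ breg F q p ≤ μ * ‖q - p‖ ^ 2) :
    ∀ q ∈ 𝒳, ∀ p ∈ 𝒳,
      ‖gradient F q - gradient F p‖ * ‖q - p‖ ≤ 2 * μ * breg F q p ∧
      ‖fderiv ℝ (gradient F) q‖ * ‖q - p‖ ^ 2 ≤ (2 * μ) ^ 2 * breg F q p := by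
  intro q hq p hp
  have hhess : ∀ x ∈ 𝒳, ‖fderiv ℝ (gradient F) x‖ ≤ 2 * μ := fun x hx =>
    norm_fderiv_gradient_le_of_abs_inner_le hopen hF (by linarith)
      (fun y hy z hz => abs_inner_gradient_sub_gradient_le (hsim y hy z hz) (hsim z hz y hy)) hx
  have hlip : ‖gradient F q - gradient F p‖ ≤ 2 * μ * ‖q - p‖ :=
    hconv.norm_image_sub_le_of_norm_fderiv_le
      (fun x hx => (hF.contDiffAt (hopen.mem_nhds hx)).differentiableAt_gradient) hhess hp hq
  have hD : ‖q - p‖ ^ 2 ≤ breg F q p := (hsim p hp q hq).1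
  have hD0 : 0 ≤ breg F q p := (sq_nonneg _).trans hD
  have hμ2 : 2 * μ ≤ (2 * μ) ^ 2 := by nlinarith
  constructor
  · calc ‖gradient F q - gradient F p‖ * ‖q - p‖ ≤ 2 * μ * ‖q - p‖ * ‖q - p‖ := by gcongr
      _ = 2 * μ * ‖q - p‖ ^ 2 := by ring
      _ ≤ 2 * μ * breg F q p := by gcongr
  · calc ‖fderiv ℝ (gradient F) q‖ * ‖q - p‖ ^ 2 ≤ 2 * μ * breg F q p := by
          gcongr
          exact hhess q hq
      _ ≤ (2 * μ) ^ 2 * breg F q p := by gcongr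

/-- Lemma 6.8(i) of the paper: any `μ`-similar Bregman divergence is `2μ`-admissible,
i.e. `‖∇_q D_F(q,p)‖·‖q−p‖ ≤ 2μ·D_F(q,p)` and `‖∇²_q D_F(q,p)‖·‖q−p‖² ≤ (2μ)²·D_F(q,p)`,
where `∇_q D_F(q,p) = ∇F(q) − ∇F(p)` and `∇²_q D_F(q,p) = ∇²F(q)`. -/
theorem stmt15
    {d : ℕ} (𝒳 : Set (EuclideanSpace ℝ (Fin d)))
    (hopen : IsOpen 𝒳) (hconv : Convex ℝ 𝒳)
    (F : EuclideanSpace ℝ (Fin d) → ℝ)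
    (hsc : StrictConvexOn ℝ 𝒳 F) (hF : ContDiffOn ℝ 2 F 𝒳)
    (μ : ℝ) (hμ : 1 ≤ μ)
    (hsim : ∀ p ∈ 𝒳, ∀ q ∈ 𝒳, ‖q - p‖ ^ 2 ≤ breg F q p ∧ breg F q p ≤ μ * ‖q - p‖ ^ 2) :
    ∀ q ∈ 𝒳, ∀ p ∈ 𝒳,
      ‖gradient F q - gradient F p‖ * ‖q - p‖ ≤ 2 * μ * breg F q p ∧
      ‖fderiv ℝ (gradient F) q‖ * ‖q - p‖ ^ 2 ≤ (2 * μ) ^ 2 * breg F q p :=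
  stmt15_general 𝒳 hopen hconv F hF μ hμ hsim
end

section
/- Any τ-admissible Bregman divergence D_F over an open convex domain 𝒳 ⊆ ℝ^d with τ ≥ 1 is (τ − 1)-asymmetric: for all p, q ∈ 𝒳, D_F(p, q) ≤ (τ − 1)·D_F(q, p). -/
open scoped RealInnerProductSpace

/-! The symmetrized divergence `D_F(p, q) + D_F(q, p)` equals `⟪∇F q - ∇F p, q - p⟫`, which by
Cauchy–Schwarz and the first admissibility bound is at most `τ · D_F(q, p)`. -/

theorem breg_add_breg_swap {d : ℕ} (F : EuclideanSpace ℝ (Fin d) → ℝ)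
    (p q : EuclideanSpace ℝ (Fin d)) :
    breg F p q + breg F q p = ⟪gradient F q - gradient F p, q - p⟫ := by
  have hpq : p - q = -(q - p) := (neg_sub q p).symm
  simp only [breg, inner_sub_left, hpq, inner_neg_right]
  ring

theorem breg_add_breg_swap_le_norm_mul_norm {d : ℕ} (F : EuclideanSpace ℝ (Fin d) → ℝ)
    (p q : EuclideanSpace ℝ (Fin d)) :
    breg F p q + breg F q p ≤ ‖gradient F q - gradient F p‖ * ‖q - p‖ :=
  breg_add_breg_swap F p q ▸ real_inner_le_norm _ _

theorem stmt18_general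
    {d : ℕ} (𝒳 : Set (EuclideanSpace ℝ (Fin d)))
    (F : EuclideanSpace ℝ (Fin d) → ℝ)
    (τ : ℝ)
    (hadm : ∀ q ∈ 𝒳, ∀ p ∈ 𝒳,
      ‖gradient F q - gradient F p‖ * ‖q - p‖ ≤ τ * breg F q p ∧
      ‖fderiv ℝ (gradient F) q‖ * ‖q - p‖ ^ 2 ≤ τ ^ 2 * breg F q p) :
    ∀ p ∈ 𝒳, ∀ q ∈ 𝒳, breg F p q ≤ (τ - 1) * breg F q p := by
  intro p hp q hq
  have hsum := breg_add_breg_swap_le_norm_mul_norm F p q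
  have hgrad := (hadm q hq p hp).1
  linarith

/-- Any `τ`-admissible Bregman divergence with `τ ≥ 1` is `(τ−1)`-asymmetric:
`D_F(p,q) ≤ (τ−1)·D_F(q,p)` for all `p, q ∈ 𝒳`. (Here admissibility is
`‖∇F(q)−∇F(p)‖·‖q−p‖ ≤ τ·D_F(q,p)` and `‖∇²F(q)‖·‖q−p‖² ≤ τ²·D_F(q,p)`.) -/
theorem stmt18
    {d : ℕ} (𝒳 : Set (EuclideanSpace ℝ (Fin d)))
    (hopen : IsOpen 𝒳) (hconv : Convex ℝ 𝒳)
    (F : EuclideanSpace ℝ (Fin d) → ℝ)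
    (hsc : StrictConvexOn ℝ 𝒳 F) (hF : ContDiffOn ℝ 2 F 𝒳)
    (τ : ℝ) (hτ : 1 ≤ τ)
    (hadm : ∀ q ∈ 𝒳, ∀ p ∈ 𝒳,
      ‖gradient F q - gradient F p‖ * ‖q - p‖ ≤ τ * breg F q p ∧
      ‖fderiv ℝ (gradient F) q‖ * ‖q - p‖ ^ 2 ≤ τ ^ 2 * breg F q p) :
    ∀ p ∈ 𝒳, ∀ q ∈ 𝒳, breg F p q ≤ (τ - 1) * breg F q p :=
  stmt18_general 𝒳 F τ hadm
end
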